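/- Let n ≥ 2 and let R_n denote the quotient of the polynomial ring ℚ[x_1,…,x_{n−1}] by the ideal generated by the n−1 elements x_i·(2x_i − x_{i−1} − x_{i+1}) for 1 ≤ i ≤ n−1, with the convention x_0 = x_n = 0. Then the images in R_n of the 2^{n−1} square-free monomials ∏_{i∈L} x_i, for L ranging over all subsets of {1,…,n−1}, span R_n as a ℚ-vector space. -/

import Mathlib

/-!
Let `M` be the span of the square-free monomials. It contains `1`, so it suffices that `M` is
stable under multiplication by each generator `x_i`. For a square-free `x_L` with `i ∉ L`,
`x_i x_L` is again square-free (or zero). If `i ∈ L`, the relation `x_i (2x_i − x_{i−1} − x_{i+1})`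
multiplied by `x_{L∖i}` says `2 x_k x_L = x_{k−1} x_L + x_{k+1} x_L` for every `k ∈ L`; so on the
maximal run `i, …, i+m−1` in `L` the `x_k x_L` form an arithmetic progression, giving
`(m+1) x_i x_L = m x_{i−1} x_L + x_{i+m} x_L` with `i + m ∉ L`. Induction on `i` then finishes,
dividing by `m + 1` in characteristic zero.
-/

noncomputable section

/-- The variable `x_i` of `ℚ[x_1, …, x_{n-1}]` for `1 ≤ i ≤ n-1`, with the convention
`x_0 = x_n = 0` (indeed `x_i = 0` for all `i` outside `{1, …, n-1}`). -/
def petersonX (n : ℕ) (i : ℕ) : MvPolynomial (Fin (n - 1)) ℚ :=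
  if h : 1 ≤ i ∧ i ≤ n - 1 then MvPolynomial.X ⟨i - 1, by omega⟩ else 0

/-- The ideal of `ℚ[x_1, …, x_{n-1}]` generated by the `n-1` elements
`x_i (2x_i − x_{i−1} − x_{i+1})` for `1 ≤ i ≤ n-1`, with `x_0 = x_n = 0`. -/
def petersonIdeal (n : ℕ) : Ideal (MvPolynomial (Fin (n - 1)) ℚ) :=
  Ideal.span
    ((fun i => petersonX n i * (2 * petersonX n i - petersonX n (i - 1) - petersonX n (i + 1))) ''
      ↑(Finset.Icc 1 (n - 1)))

theorem add_one_nsmul_eq_of_harmonic {M : Type*} [AddCommGroup M] (a : ℕ → M) (m i : ℕ)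
    (ha : ∀ k, i ≤ k → k < i + m → a (k - 1) + a (k + 1) = 2 • a k) :
    (m + 1) • a i = m • a (i - 1) + a (i + m) := by
  induction m generalizing i with
  | zero => simp
  | succ m ih =>
    have hi := ha i le_rfl (by omega)
    have hshift := ih (i + 1) fun k hik hkm => ha k (by omega) (by omega)
    rw [Nat.add_sub_cancel, add_right_comm] at hshift
    linear_combination (norm := module) hshift - (m + 1) • hi

section SquarefreeSpan

variable {K A : Type*} [Field K] [CommRing A] [Algebra K A] {y : ℕ → A} {s : Finset ℕ}

variable (K y s) in
def squarefreeSpan : Submodule K A :=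
  Submodule.span K ((fun L : Finset ℕ => ∏ i ∈ L, y i) '' ↑s.powerset)

theorem prod_mem_squarefreeSpan {L : Finset ℕ} (hL : L ⊆ s) :
    ∏ i ∈ L, y i ∈ squarefreeSpan K y s :=
  Submodule.subset_span ⟨L, by simpa using hL, rfl⟩

theorem pred_mul_prod_add_succ_mul_prod
    (hrel : ∀ i ∈ s, y i * (2 * y i - y (i - 1) - y (i + 1)) = 0)
    {L : Finset ℕ} (hL : L ⊆ s) {i : ℕ} (hi : i ∈ L) :
    y (i - 1) * ∏ j ∈ L, y j + y (i + 1) * ∏ j ∈ L, y j = 2 • (y i * ∏ j ∈ L, y j) := by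
  rw [← Finset.mul_prod_erase L y hi]
  linear_combination (-∏ j ∈ L.erase i, y j) * hrel i (hL hi)

theorem mul_prod_mem_squarefreeSpan_of_notMem (hsupp : ∀ j ∉ s, y j = 0)
    {L : Finset ℕ} (hL : L ⊆ s) {i : ℕ} (hi : i ∉ L) :
    y i * ∏ j ∈ L, y j ∈ squarefreeSpan K y s := by
  by_cases his : i ∈ s
  · rw [← Finset.prod_insert hi]
    exact prod_mem_squarefreeSpan (Finset.insert_subset his hL)
  · simp [hsupp i his]

theorem mul_prod_mem_squarefreeSpan [CharZero K] (hs0 : 0 ∉ s) (hsupp : ∀ j ∉ s, y j = 0)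
    (hrel : ∀ i ∈ s, y i * (2 * y i - y (i - 1) - y (i + 1)) = 0)
    {L : Finset ℕ} (hL : L ⊆ s) (i : ℕ) :
    y i * ∏ j ∈ L, y j ∈ squarefreeSpan K y s := by
  induction i using Nat.strong_induction_on with
  | _ i ih =>
  by_cases hi : i ∈ L
  swap
  · exact mul_prod_mem_squarefreeSpan_of_notMem hsupp hL hi
  have hi0 : i ≠ 0 := fun h => hs0 (h ▸ hL hi)
  have hexit : ∃ m, i + m ∉ L := ⟨L.sup id + 1, fun h => by
    have := L.le_sup (f := id) h
    simp only [id] at this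
    omega⟩
  set m := Nat.find hexit
  have hrun := add_one_nsmul_eq_of_harmonic (fun j => y j * ∏ j ∈ L, y j) m i fun k hik hkm =>
    pred_mul_prod_add_succ_mul_prod hrel hL (by
      simpa [Nat.add_sub_cancel' hik] using Nat.find_min hexit (show k - i < m by omega))
  rw [← Submodule.smul_mem_iff _ (Nat.cast_ne_zero.mpr m.succ_ne_zero : ((m + 1 : ℕ) : K) ≠ 0),
    Nat.cast_smul_eq_nsmul, hrun, ← Nat.cast_smul_eq_nsmul K]
  exact add_mem (Submodule.smul_mem _ _ (ih (i - 1) (by omega)))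
    (mul_prod_mem_squarefreeSpan_of_notMem hsupp hL (Nat.find_spec hexit))

theorem mul_mem_squarefreeSpan [CharZero K] (hs0 : 0 ∉ s) (hsupp : ∀ j ∉ s, y j = 0)
    (hrel : ∀ i ∈ s, y i * (2 * y i - y (i - 1) - y (i + 1)) = 0)
    (i : ℕ) {x : A} (hx : x ∈ squarefreeSpan K y s) :
    x * y i ∈ squarefreeSpan K y s := by
  induction hx using Submodule.span_induction with
  | mem x hx =>
    obtain ⟨L, hL, rfl⟩ := hx
    rw [mul_comm]
    exact mul_prod_mem_squarefreeSpan hs0 hsupp hrel (by simpa using hL) i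
  | zero => simp
  | add x x' _ _ hx hx' => rw [add_mul]; exact add_mem hx hx'
  | smul c x _ hx => rw [smul_mul_assoc]; exact Submodule.smul_mem _ c hx

theorem squarefreeSpan_eq_top [CharZero K] (hs0 : 0 ∉ s) (hsupp : ∀ j ∉ s, y j = 0)
    (hrel : ∀ i ∈ s, y i * (2 * y i - y (i - 1) - y (i + 1)) = 0)
    (hgen : Algebra.adjoin K (Set.range y) = ⊤) :
    squarefreeSpan K y s = ⊤ := by
  have hadjoin {a : A} (ha : a ∈ Algebra.adjoin K (Set.range y)) :
      ∀ x ∈ squarefreeSpan K y s, x * a ∈ squarefreeSpan K y s := by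
    induction ha using Algebra.adjoin_induction with
    | mem a ha =>
      obtain ⟨i, rfl⟩ := ha
      exact fun x => mul_mem_squarefreeSpan hs0 hsupp hrel i
    | algebraMap c =>
      intro x hx
      rw [mul_comm, ← Algebra.smul_def]
      exact Submodule.smul_mem _ c hx
    | add a b _ _ ha hb =>
      intro x hx
      rw [mul_add]
      exact add_mem (ha x hx) (hb x hx)
    | mul a b _ _ ha hb =>
      intro x hx
      rw [← mul_assoc]
      exact hb _ (ha x hx)
  have hone : (1 : A) ∈ squarefreeSpan K y s := by
    simpa using prod_mem_squarefreeSpan (K := K) (y := y) (Finset.empty_subset s)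
  refine eq_top_iff.mpr fun a _ => ?_
  simpa using hadjoin (hgen ▸ Algebra.mem_top) 1 hone

end SquarefreeSpan

theorem petersonX_eq_zero_of_notMem {n i : ℕ} (hi : i ∉ Finset.Icc 1 (n - 1)) :
    petersonX n i = 0 :=
  dif_neg (by simpa using hi)

theorem petersonX_succ (n : ℕ) (j : Fin (n - 1)) : petersonX n (j + 1) = MvPolynomial.X j :=
  dif_pos (by omega)

theorem adjoin_range_petersonX (n : ℕ) : Algebra.adjoin ℚ (Set.range (petersonX n)) = ⊤ :=
  top_unique <| MvPolynomial.adjoin_range_X.symm.le.trans <| Algebra.adjoin_mono <|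
    Set.range_subset_iff.mpr fun j => ⟨j + 1, petersonX_succ n j⟩

theorem petersonX_mul_mem_petersonIdeal {n i : ℕ} (hi : i ∈ Finset.Icc 1 (n - 1)) :
    petersonX n i * (2 * petersonX n i - petersonX n (i - 1) - petersonX n (i + 1)) ∈
      petersonIdeal n :=
  Ideal.subset_span ⟨i, hi, rfl⟩

theorem squarefree_monomials_span (n : ℕ) :
    Submodule.span ℚ
      ((fun L : Finset ℕ => Ideal.Quotient.mk (petersonIdeal n) (∏ i ∈ L, petersonX n i)) ''
        ↑(Finset.Icc 1 (n - 1)).powerset) = ⊤ := by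
  let y i := Ideal.Quotient.mkₐ ℚ (petersonIdeal n) (petersonX n i)
  have hgen : Algebra.adjoin ℚ (Set.range y) = ⊤ := by
    rw [Set.range_comp', Algebra.adjoin_image, adjoin_range_petersonX, Algebra.map_top,
      AlgHom.range_eq_top]
    exact Ideal.Quotient.mkₐ_surjective ℚ _
  simp_rw [map_prod]
  refine squarefreeSpan_eq_top (y := y) (by simp) (fun j hj => ?_) (fun i hi => ?_) hgen
  · simp [y, petersonX_eq_zero_of_notMem hj]
  · simpa [y, map_ofNat] using
      Ideal.Quotient.eq_zero_iff_mem.mpr (petersonX_mul_mem_petersonIdeal hi)
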